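/- Let G be the paw graph on vertices x_1, x_2, x_3, x_4 with edges {x_1,x_2}, {x_2,x_3}, {x_1,x_3}, {x_1,x_4}. For every integer k ≥ 2, the monomial (x_2 x_4)^{k-1} x_3 lies in I_c(G)^(k) but not in I_c(G)^k; hence I_c(G)^(k) ≠ I_c(G)^k for all k ≥ 2. -/
import Mathlib


open MvPolynomial

noncomputable def symbPow {R : Type*} [CommRing R] (I : Ideal R) (k : ℕ) : Ideal R :=
  ⨅ p ∈ I.minimalPrimes, p ^ k

noncomputable def compIdeal {V : Type*} [Fintype V] [DecidableEq V]
    (K : Type*) [Field K] (G : SimpleGraph V) : Ideal (MvPolynomial V K) :=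
  Ideal.span {m | ∃ i j, G.Adj i j ∧ m = ∏ l ∈ Finset.univ \ {i, j}, X l}

/-- The paw graph on vertices `0,1,2,3` with edges `{0,1},{1,2},{0,2},{0,3}`. -/
def pawGraph : SimpleGraph (Fin 4) :=
  SimpleGraph.fromEdgeSet {s(0, 1), s(1, 2), s(0, 2), s(0, 3)}

section Aux

variable {K : Type*} [Field K]

lemma paw_gen_mem (i j : Fin 4) (h : pawGraph.Adj i j) :
    (∏ l ∈ Finset.univ \ {i, j}, X l : MvPolynomial (Fin 4) K) ∈ compIdeal K pawGraph :=
  Ideal.subset_span ⟨i, j, h, rfl⟩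

lemma paw_mem_aux (i j a b : Fin 4) (h : pawGraph.Adj i j)
    (hset : (Finset.univ \ ({i, j} : Finset (Fin 4))) = {a, b}) (hab : a ≠ b) :
    (X a * X b : MvPolynomial (Fin 4) K) ∈ compIdeal K pawGraph := by
  have h0 := paw_gen_mem (K := K) i j h
  rw [hset, Finset.prod_insert (by simp [hab]), Finset.prod_singleton] at h0
  exact h0

lemma X13_mem : (X 1 * X 3 : MvPolynomial (Fin 4) K) ∈ compIdeal K pawGraph :=
  paw_mem_aux 0 2 1 3
    (by simp [pawGraph, SimpleGraph.fromEdgeSet_adj, Sym2.eq_iff]) (by decide) (by decide)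

lemma X23_mem : (X 2 * X 3 : MvPolynomial (Fin 4) K) ∈ compIdeal K pawGraph :=
  paw_mem_aux 0 1 2 3
    (by simp [pawGraph, SimpleGraph.fromEdgeSet_adj, Sym2.eq_iff]) (by decide) (by decide)

lemma X12_mem : (X 1 * X 2 : MvPolynomial (Fin 4) K) ∈ compIdeal K pawGraph :=
  paw_mem_aux 0 3 1 2
    (by simp [pawGraph, SimpleGraph.fromEdgeSet_adj, Sym2.eq_iff]) (by decide) (by decide)

lemma mem_pow_of_two {R : Type*} [CommRing R] (p : Ideal R) {a b : R}
    (ha : a ∈ p) (hb : b ∈ p) {i j k : ℕ} (hk : k ≤ i + j) (c : R) :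
    c * (a ^ i * b ^ j) ∈ p ^ k := by
  refine Ideal.mul_mem_left _ _ (Ideal.pow_le_pow_right hk ?_)
  rw [pow_add]
  exact Ideal.mul_mem_mul (Ideal.pow_mem_pow ha i) (Ideal.pow_mem_pow hb j)

/-- The ideal of polynomials all of whose monomials have total degree at least `n`. -/
def degGE (K : Type*) [Field K] (n : ℕ) : Ideal (MvPolynomial (Fin 4) K) where
  carrier := {f | ∀ d ∈ f.support, n ≤ d.sum fun _ e => e}
  zero_mem' := by simp
  add_mem' := by
    intro a b ha hb d hd
    rcases Finset.mem_union.mp (MvPolynomial.support_add hd) with h | h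
    · exact ha d h
    · exact hb d h
  smul_mem' := by
    intro c f hf d hd
    rw [smul_eq_mul] at hd
    obtain ⟨d1, hd1, d2, hd2, rfl⟩ := Finset.mem_add.mp (MvPolynomial.support_mul c f hd)
    have : (d1 + d2).sum (fun _ e => e) = d1.sum (fun _ e => e) + d2.sum (fun _ e => e) :=
      Finsupp.sum_add_index' (fun _ => rfl) (fun _ _ _ => rfl)
    rw [this]
    exact le_add_of_nonneg_of_le (Nat.zero_le _) (hf d2 hd2)

lemma degGE_mul_mem {m n : ℕ} {f g : MvPolynomial (Fin 4) K}
    (hf : f ∈ degGE K m) (hg : g ∈ degGE K n) : f * g ∈ degGE K (m + n) := by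
  intro d hd
  obtain ⟨d1, hd1, d2, hd2, rfl⟩ := Finset.mem_add.mp (MvPolynomial.support_mul f g hd)
  have : (d1 + d2).sum (fun _ e => e) = d1.sum (fun _ e => e) + d2.sum (fun _ e => e) :=
    Finsupp.sum_add_index' (fun _ => rfl) (fun _ _ _ => rfl)
  rw [this]
  exact add_le_add (hf d1 hd1) (hg d2 hd2)

lemma X_mem_degGE (l : Fin 4) : (X l : MvPolynomial (Fin 4) K) ∈ degGE K 1 := by
  intro d hd
  rw [MvPolynomial.support_X, Finset.mem_singleton] at hd
  subst hd
  simp [Finsupp.sum_single_index]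

lemma prod_X_mem_degGE (s : Finset (Fin 4)) :
    (∏ l ∈ s, X l : MvPolynomial (Fin 4) K) ∈ degGE K s.card := by
  classical
  induction s using Finset.induction_on with
  | empty => intro d hd; exact Nat.zero_le _
  | @insert a s hx ih =>
    rw [Finset.prod_insert hx, Finset.card_insert_of_notMem hx]
    have := degGE_mul_mem (X_mem_degGE (K := K) a) ih
    rwa [add_comm 1 s.card] at this

lemma compIdeal_le_degGE : compIdeal K pawGraph ≤ degGE K 2 := by
  rw [compIdeal, Ideal.span_le]
  rintro f ⟨i, j, hadj, rfl⟩
  have hcard : (Finset.univ \ ({i, j} : Finset (Fin 4))).card = 2 := by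
    rw [Finset.card_sdiff_of_subset (Finset.subset_univ _), Finset.card_pair hadj.ne]
    rfl
  have := prod_X_mem_degGE (K := K) (Finset.univ \ {i, j})
  rwa [hcard] at this

lemma compIdeal_pow_le_degGE (k : ℕ) : compIdeal K pawGraph ^ k ≤ degGE K (2 * k) := by
  induction k with
  | zero => intro f _ d hd; exact Nat.zero_le _
  | succ k ih =>
    rw [pow_succ]
    refine (Ideal.mul_le.mpr fun r hr s hs => ?_)
    have := degGE_mul_mem (ih hr) (compIdeal_le_degGE hs)
    have heq : 2 * k + 2 = 2 * (k + 1) := by ring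
    rwa [heq] at this

lemma monom_eq (k : ℕ) (hk : 2 ≤ k) :
    ((X 1 * X 3 : MvPolynomial (Fin 4) K) ^ (k - 1) * X 2) =
      monomial (Finsupp.single 1 (k - 1) + Finsupp.single 3 (k - 1) + Finsupp.single 2 1) 1 := by
  rw [mul_pow, ← pow_one (X 2 : MvPolynomial (Fin 4) K), X_pow_eq_monomial,
    X_pow_eq_monomial, X_pow_eq_monomial, monomial_mul, monomial_mul]
  simp

end Aux

/-- For every `k ≥ 2`, the monomial `(x₂ x₄)^{k-1} x₃` lies in `I_c(paw)^(k)` but not in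
`I_c(paw)^k`; hence the two powers differ. -/
theorem stmt5 (K : Type*) [Field K] (k : ℕ) (hk : 2 ≤ k) :
    ((X 1 * X 3 : MvPolynomial (Fin 4) K) ^ (k - 1) * X 2 ∈ symbPow (compIdeal K pawGraph) k) ∧
    ((X 1 * X 3 : MvPolynomial (Fin 4) K) ^ (k - 1) * X 2 ∉ compIdeal K pawGraph ^ k) ∧
    symbPow (compIdeal K pawGraph) k ≠ compIdeal K pawGraph ^ k := by
  set m : MvPolynomial (Fin 4) K := (X 1 * X 3) ^ (k - 1) * X 2 with hm
  have part1 : m ∈ symbPow (compIdeal K pawGraph) k := by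
    simp only [symbPow, Ideal.mem_iInf]
    intro p hp
    have hprime : p.IsPrime := hp.1.1
    have hle : compIdeal K pawGraph ≤ p := hp.1.2
    have h13 := hprime.mem_or_mem (hle X13_mem)
    have h23 := hprime.mem_or_mem (hle X23_mem)
    have h12 := hprime.mem_or_mem (hle X12_mem)
    have caseA : X 1 ∈ p → X 2 ∈ p → m ∈ p ^ k := by
      intro h1 h2
      have heq : m = X 3 ^ (k - 1) * (X 1 ^ (k - 1) * X 2 ^ 1) := by
        rw [hm, mul_pow, pow_one]; ring
      rw [heq]
      exact mem_pow_of_two p h1 h2 (by omega) _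
    have caseB : X 1 ∈ p → X 3 ∈ p → m ∈ p ^ k := by
      intro h1 h3
      have heq : m = X 2 * (X 1 ^ (k - 1) * X 3 ^ (k - 1)) := by
        rw [hm, mul_pow]; ring
      rw [heq]
      exact mem_pow_of_two p h1 h3 (by omega) _
    have caseC : X 2 ∈ p → X 3 ∈ p → m ∈ p ^ k := by
      intro h2 h3
      have heq : m = X 1 ^ (k - 1) * (X 3 ^ (k - 1) * X 2 ^ 1) := by
        rw [hm, mul_pow, pow_one]; ring
      rw [heq]
      exact mem_pow_of_two p h3 h2 (by omega) _
    rcases h13 with h1 | h3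
    · rcases h23 with h2 | h3
      · exact caseA h1 h2
      · exact caseB h1 h3
    · rcases h23 with h2 | _
      · exact caseC h2 h3
      · rcases h12 with h1 | h2
        · exact caseB h1 h3
        · exact caseC h2 h3
  have part2 : m ∉ compIdeal K pawGraph ^ k := by
    classical
    intro hmem
    have hdeg := compIdeal_pow_le_degGE (K := K) k hmem
    set d : Fin 4 →₀ ℕ :=
      Finsupp.single 1 (k - 1) + Finsupp.single 3 (k - 1) + Finsupp.single 2 1 with hd
    have hmd : m = monomial d 1 := monom_eq k hk
    have hdsup : d ∈ m.support := by
      rw [hmd, support_monomial, if_neg (one_ne_zero)]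
      exact Finset.mem_singleton_self d
    have hsum : d.sum (fun _ e => e) = (k - 1) + (k - 1) + 1 := by
      rw [hd]
      rw [Finsupp.sum_add_index' (fun _ => rfl) (fun _ _ _ => rfl),
        Finsupp.sum_add_index' (fun _ => rfl) (fun _ _ _ => rfl),
        Finsupp.sum_single_index rfl, Finsupp.sum_single_index rfl,
        Finsupp.sum_single_index rfl]
    have := hdeg d hdsup
    rw [hsum] at this
    omega
  refine ⟨part1, part2, fun heq => part2 (heq ▸ part1)⟩
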